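/- Let D be a Steiner triple system on 19 points (a (19,3,1)-design). Then 12 ≤ γ(D) ≤ 15. -/

import Mathlib

open Finset

variable {α ι : Type*}

/-- The incidence (Levi) graph of the block family `B` indexed by `ι` over point set `α`:
a bipartite graph where point `p` is adjacent to block `i` iff `p ∈ B i`. -/
def incGraph (B : ι → Finset α) : SimpleGraph (α ⊕ ι) where
  Adj x y :=
    (∃ p i, x = Sum.inl p ∧ y = Sum.inr i ∧ p ∈ B i) ∨
    (∃ p i, x = Sum.inr i ∧ y = Sum.inl p ∧ p ∈ B i)
  symm := by
    constructor
    rintro x y (⟨p, i, rfl, rfl, h⟩ | ⟨p, i, rfl, rfl, h⟩)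
    · exact Or.inr ⟨p, i, rfl, rfl, h⟩
    · exact Or.inl ⟨p, i, rfl, rfl, h⟩
  loopless := by
    constructor
    rintro x (⟨p, i, rfl, h, -⟩ | ⟨p, i, rfl, h, -⟩) <;> simp at h

/-- A dominating set of vertices in a graph: every vertex not in `S` has a neighbour in `S`. -/
def IsDomSet {V : Type*} (G : SimpleGraph V) (S : Finset V) : Prop :=
  ∀ v ∉ S, ∃ s ∈ S, G.Adj v s

/-- The domination number of a graph: the minimum size of a dominating set. -/
noncomputable def domNum {V : Type*} (G : SimpleGraph V) : ℕ :=
  sInf {n | ∃ S : Finset V, IsDomSet G S ∧ S.card = n}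

/-!
Lower bound: if a dominating set has `p` points and `l` blocks, the `19 - p` other points lie on
its blocks, so `p + 3l ≥ 19`, and each of the other `57 - l` blocks meets its points. A block with
`t ≤ 3` chosen points satisfies `3·[t > 0] + t(t - 1) ≤ 3t`; summing over the blocks, with each
point on `9` blocks and each pair of chosen points on exactly one, gives
`3(57 - l) + p(p - 1) ≤ 27p`. These two inequalities force `p + l ≥ 12`.

Upper bound: for any point set `J`, the points outside `J`, the blocks inside `J`, and `⌈m/2⌉`
blocks covering the `m` remaining points of `J` (a block through each pair) dominate. If the
independent set `I` has `|I| = 6` or `7`, then the blocks with two points in `I` number at most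
`C(|I|, 2) < 2(19 - |I|)`, so some `z ∉ I` completes at most one of them. Starting from a greedy
independent `6`-set and adding such a point once or twice gives `J` with at most one block inside
and `|J| + (blocks inside J) ≥ 8`, hence a dominating set of size `15`.
-/

theorem domNum_le {V : Type*} {G : SimpleGraph V} {S : Finset V} (hS : IsDomSet G S) :
    domNum G ≤ #S :=
  Nat.sInf_le ⟨S, hS, rfl⟩

theorem exists_isDomSet_card_eq_domNum {V : Type*} [Fintype V] (G : SimpleGraph V) :
    ∃ S, IsDomSet G S ∧ #S = domNum G :=
  Nat.sInf_mem (s := {n | ∃ S : Finset V, IsDomSet G S ∧ #S = n})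
    ⟨_, univ, fun v hv => absurd (mem_univ v) hv, rfl⟩

section IncGraph

variable {B : ι → Finset α}

@[simp] theorem incGraph_adj_inl_inr {p : α} {i : ι} :
    (incGraph B).Adj (.inl p) (.inr i) ↔ p ∈ B i := by
  simp [incGraph]

@[simp] theorem incGraph_adj_inr_inl {p : α} {i : ι} :
    (incGraph B).Adj (.inr i) (.inl p) ↔ p ∈ B i := by
  simp [incGraph]

@[simp] theorem not_incGraph_adj_inl_inl {p q : α} : ¬ (incGraph B).Adj (.inl p) (.inl q) := by
  simp [incGraph]

@[simp] theorem not_incGraph_adj_inr_inr {i j : ι} : ¬ (incGraph B).Adj (.inr i) (.inr j) := by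
  simp [incGraph]

theorem IsDomSet.compl_toLeft_subset [Fintype α] [DecidableEq α] {S : Finset (α ⊕ ι)}
    (hS : IsDomSet (incGraph B) S) : S.toLeftᶜ ⊆ S.toRight.biUnion B := by
  intro p hp
  obtain ⟨s | i, hs, hadj⟩ := hS (.inl p) (by simpa using hp)
  · exact absurd hadj not_incGraph_adj_inl_inl
  · exact mem_biUnion.mpr ⟨i, mem_toRight.mpr hs, incGraph_adj_inl_inr.mp hadj⟩

theorem IsDomSet.filter_not_nonempty_subset [Fintype ι] [DecidableEq α] {S : Finset (α ⊕ ι)}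
    (hS : IsDomSet (incGraph B) S) :
    ({i | ¬ (B i ∩ S.toLeft).Nonempty} : Finset ι) ⊆ S.toRight := by
  intro i hi
  by_contra hiS
  obtain ⟨p | j, hs, hadj⟩ := hS (.inr i) (by simpa using hiS)
  · exact (mem_filter.mp hi).2 ⟨p, mem_inter.mpr ⟨incGraph_adj_inr_inl.mp hadj,
      mem_toLeft.mpr hs⟩⟩
  · exact absurd hadj not_incGraph_adj_inr_inr

theorem isDomSet_disjSum [Fintype α] [DecidableEq α] {J : Finset α} {L : Finset ι}
    (hJ : ∀ p ∈ J, ∃ i ∈ L, p ∈ B i) (hL : ∀ i, B i ⊆ J → i ∈ L) :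
    IsDomSet (incGraph B) (Jᶜ.disjSum L) := by
  rintro (p | i) hv
  · obtain ⟨i, hi, hpi⟩ := hJ p (by simpa using hv)
    exact ⟨.inr i, inr_mem_disjSum.mpr hi, incGraph_adj_inl_inr.mpr hpi⟩
  · obtain ⟨p, hpi, hpJ⟩ := not_subset.mp fun h => hv (inr_mem_disjSum.mpr (hL i h))
    exact ⟨.inl p, inl_mem_disjSum.mpr (mem_compl.mpr hpJ), incGraph_adj_inr_inl.mpr hpi⟩

end IncGraph

section Counting

variable [Fintype ι] [DecidableEq α] {B : ι → Finset α}

theorem sum_card_inter_eq_sum_card_filter_mem (P : Finset α) :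
    ∑ i, #(B i ∩ P) = ∑ x ∈ P, #{i | x ∈ B i} := by
  have h := sum_card_bipartiteAbove_eq_sum_card_bipartiteBelow (s := P) (t := univ)
    (r := fun x i => x ∈ B i)
  simp only [bipartiteAbove, bipartiteBelow, filter_mem_eq_inter] at h
  simpa only [inter_comm] using h.symm

theorem eq_of_mem_of_mem (hpair : ∀ x y : α, x ≠ y → #{i | x ∈ B i ∧ y ∈ B i} = 1)
    {x y : α} {i j : ι} (hxy : x ≠ y) (hxi : x ∈ B i) (hyi : y ∈ B i) (hxj : x ∈ B j)
    (hyj : y ∈ B j) : i = j :=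
  card_le_one.mp (hpair x y hxy).le i (by simp [hxi, hyi]) j (by simp [hxj, hyj])

theorem sum_card_inter_mul_pred (hpair : ∀ x y : α, x ≠ y → #{i | x ∈ B i ∧ y ∈ B i} = 1)
    (P : Finset α) : ∑ i, #(B i ∩ P) * (#(B i ∩ P) - 1) = #P * (#P - 1) := by
  have h := sum_card_bipartiteAbove_eq_sum_card_bipartiteBelow (s := P.offDiag) (t := univ)
    (r := fun q i => q.1 ∈ B i ∧ q.2 ∈ B i)
  have hbelow : ∀ i, P.offDiag.bipartiteBelow (fun q i => q.1 ∈ B i ∧ q.2 ∈ B i) i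
      = (B i ∩ P).offDiag := by
    intro i
    ext q
    simp only [bipartiteBelow, mem_filter, mem_offDiag, mem_inter]
    tauto
  simp only [bipartiteAbove, hbelow] at h
  rw [sum_congr rfl fun q hq => hpair q.1 q.2 (mem_offDiag.mp hq).2.2, ← card_eq_sum_ones] at h
  simp only [Nat.mul_sub_one, ← offDiag_card, h]

theorem two_mul_card_filter_mem_add_one [Fintype α] (hblock : ∀ i, #(B i) = 3)
    (hpair : ∀ x y : α, x ≠ y → #{i | x ∈ B i ∧ y ∈ B i} = 1) (x : α) :
    2 * #{i | x ∈ B i} + 1 = Fintype.card α := by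
  have h := sum_card_bipartiteAbove_eq_sum_card_bipartiteBelow (s := univ.erase x)
    (t := {i | x ∈ B i}) (r := fun y i => y ∈ B i)
  simp only [bipartiteAbove, bipartiteBelow, filter_filter, filter_mem_eq_inter, erase_inter,
    univ_inter] at h
  rw [sum_congr rfl fun y hy => hpair x y (ne_of_mem_erase hy).symm,
    sum_congr rfl fun i hi => (card_erase_of_mem (mem_filter.mp hi).2).trans
      (congrArg (· - 1) (hblock i))] at h
  simp only [sum_const, smul_eq_mul, card_erase_of_mem (mem_univ x), card_univ] at h
  have := Fintype.card_pos_iff.mpr ⟨x⟩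
  omega

theorem three_mul_card_filter_nonempty_add_le (hblock : ∀ i, #(B i) = 3)
    (hpair : ∀ x y : α, x ≠ y → #{i | x ∈ B i ∧ y ∈ B i} = 1) (P : Finset α) :
    3 * #{i | (B i ∩ P).Nonempty} + #P * (#P - 1) ≤ 3 * ∑ i, #(B i ∩ P) := by
  rw [← sum_card_inter_mul_pred hpair, card_filter, mul_sum, mul_sum, ← sum_add_distrib]
  refine sum_le_sum fun i _ => ?_
  have ht : #(B i ∩ P) ≤ 3 := hblock i ▸ card_le_card inter_subset_left
  split_ifs with h
  · have := h.card_pos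
    interval_cases #(B i ∩ P) <;> omega
  · simp [not_nonempty_iff_eq_empty.mp h]

end Counting

theorem twelve_le_card_of_isDomSet [Fintype α] [Fintype ι] [DecidableEq α] {B : ι → Finset α}
    (hv : Fintype.card α = 19) (hblock : ∀ i, #(B i) = 3)
    (hpair : ∀ x y : α, x ≠ y → #{i | x ∈ B i ∧ y ∈ B i} = 1)
    {S : Finset (α ⊕ ι)} (hS : IsDomSet (incGraph B) S) : 12 ≤ #S := by
  have hr (x : α) : #{i | x ∈ B i} = 9 := by
    have := two_mul_card_filter_mem_add_one hblock hpair x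
    omega
  have hb : Fintype.card ι = 57 := by
    have := sum_card_inter_eq_sum_card_filter_mem (B := B) univ
    simp only [inter_univ, hblock, hr, sum_const, card_univ, hv, smul_eq_mul] at this
    omega
  have hpoints : 19 ≤ #S.toLeft + 3 * #S.toRight := by
    have h1 := card_le_card hS.compl_toLeft_subset
    have h2 : #(S.toRight.biUnion B) ≤ 3 * #S.toRight :=
      card_biUnion_le.trans (by simp [hblock, mul_comm])
    rw [card_compl, hv] at h1
    omega
  have hblocks : 57 ≤ #{i | (B i ∩ S.toLeft).Nonempty} + #S.toRight := by
    have h1 := card_le_card hS.filter_not_nonempty_subset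
    have h2 := card_filter_add_card_filter_not (s := univ) (p := fun i => (B i ∩ S.toLeft).Nonempty)
    rw [card_univ, hb] at h2
    omega
  have hpairs : 3 * #{i | (B i ∩ S.toLeft).Nonempty} + #S.toLeft * (#S.toLeft - 1)
      ≤ 27 * #S.toLeft := by
    have := three_mul_card_filter_nonempty_add_le hblock hpair S.toLeft
    rw [sum_card_inter_eq_sum_card_filter_mem, sum_congr rfl fun x _ => hr x, sum_const,
      smul_eq_mul] at this
    linarith
  have hP : #S.toLeft ≤ 19 := hv ▸ card_le_univ S.toLeft
  rw [← card_toLeft_add_card_toRight (u := S)]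
  generalize #S.toLeft = p at *
  interval_cases p <;> omega

theorem exists_cover_two_mul_card_le {B : ι → Finset α}
    (hcov : ∀ x y : α, ∃ i, x ∈ B i ∧ y ∈ B i) (Q : Finset α) :
    ∃ L : Finset ι, 2 * #L ≤ #Q + 1 ∧ ∀ p ∈ Q, ∃ i ∈ L, p ∈ B i := by
  classical
  induction Q using Finset.strongInduction with
  | H Q ih =>
  rcases le_or_gt #Q 1 with hQ | hQ
  · choose f hf using fun x => hcov x x
    refine ⟨Q.image f, ?_, fun p hp => ⟨f p, mem_image_of_mem f hp, (hf p).1⟩⟩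
    have := card_image_le (s := Q) (f := f)
    omega
  · obtain ⟨x, hx, y, hy, hxy⟩ := one_lt_card.mp hQ
    obtain ⟨i, hxi, hyi⟩ := hcov x y
    obtain ⟨L, hL, hLQ⟩ := ih (Q \ B i)
      ((ssubset_iff_of_subset sdiff_subset).mpr ⟨x, hx, fun h => (mem_sdiff.mp h).2 hxi⟩)
    refine ⟨insert i L, ?_, fun p hp => ?_⟩
    · have h2 : #({x, y} : Finset α) ≤ #(Q ∩ B i) :=
        card_le_card (by simp [insert_subset_iff, hx, hy, hxi, hyi])
      rw [card_pair hxy] at h2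
      have := card_inter_add_card_sdiff Q (B i)
      have := card_insert_le i L
      omega
    · by_cases hpi : p ∈ B i
      · exact ⟨i, mem_insert_self i L, hpi⟩
      · obtain ⟨j, hj, hpj⟩ := hLQ p (mem_sdiff.mpr ⟨hp, hpi⟩)
        exact ⟨j, mem_insert_of_mem hj, hpj⟩

theorem exists_mem_and_mem [Fintype ι] [DecidableEq α] [Nontrivial α] {B : ι → Finset α}
    (hpair : ∀ x y : α, x ≠ y → #{i | x ∈ B i ∧ y ∈ B i} = 1) (x y : α) :
    ∃ i, x ∈ B i ∧ y ∈ B i := by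
  have hne (x y : α) (hxy : x ≠ y) : ∃ i, x ∈ B i ∧ y ∈ B i := by
    obtain ⟨i, hi⟩ := card_pos.mp ((hpair x y hxy).symm ▸ Nat.one_pos)
    exact ⟨i, (mem_filter.mp hi).2⟩
  by_cases hxy : x = y
  · obtain ⟨y', hy'⟩ := exists_ne x
    obtain ⟨i, hxi, -⟩ := hne x y' hy'.symm
    exact ⟨i, hxi, hxy ▸ hxi⟩
  · exact hne x y hxy

section BlocksIn

variable [Fintype ι] [DecidableEq α] {B : ι → Finset α}

def blocksIn (B : ι → Finset α) (J : Finset α) : Finset ι := {i | B i ⊆ J}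

@[simp] theorem mem_blocksIn {J : Finset α} {i : ι} : i ∈ blocksIn B J ↔ B i ⊆ J := by
  simp [blocksIn]

theorem blocksIn_eq_empty {J : Finset α} : blocksIn B J = ∅ ↔ ∀ i, ¬ B i ⊆ J := by
  simp [blocksIn, filter_eq_empty_iff]

theorem two_mul_domNum_le [Fintype α] (hcov : ∀ x y : α, ∃ i, x ∈ B i ∧ y ∈ B i)
    (J : Finset α) :
    2 * domNum (incGraph B)
      ≤ 2 * #Jᶜ + 2 * #(blocksIn B J) + #(J \ (blocksIn B J).biUnion B) + 1 := by
  classical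
  obtain ⟨C, hC, hCcov⟩ := exists_cover_two_mul_card_le hcov (J \ (blocksIn B J).biUnion B)
  have hS : IsDomSet (incGraph B) (Jᶜ.disjSum (blocksIn B J ∪ C)) := by
    refine isDomSet_disjSum (fun p hp => ?_)
      (fun i hi => mem_union_left _ (mem_blocksIn.mpr hi))
    by_cases hpB : p ∈ (blocksIn B J).biUnion B
    · obtain ⟨i, hi, hpi⟩ := mem_biUnion.mp hpB
      exact ⟨i, mem_union_left _ hi, hpi⟩
    · obtain ⟨i, hi, hpi⟩ := hCcov p (mem_sdiff.mpr ⟨hp, hpB⟩)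
      exact ⟨i, mem_union_right _ hi, hpi⟩
  have := domNum_le hS
  have := card_union_le (blocksIn B J) C
  rw [card_disjSum] at *
  omega

theorem card_inter_eq_two_of_mem_blocksIn_insert (hblock : ∀ i, #(B i) = 3) {I : Finset α}
    (hI : blocksIn B I = ∅) {z : α} (hz : z ∉ I) {i : ι} (hi : i ∈ blocksIn B (insert z I)) :
    #(B i ∩ I) = 2 := by
  have hsub : (B i).erase z ⊆ I := subset_insert_iff.mp (mem_blocksIn.mp hi)
  have hzi : z ∈ B i := by
    by_contra hzi
    exact blocksIn_eq_empty.mp hI i (erase_eq_of_notMem hzi ▸ hsub)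
  have heq : B i ∩ I = (B i).erase z := by
    ext x
    simp only [mem_inter, mem_erase]
    exact ⟨fun ⟨hx, hxI⟩ => ⟨fun h => hz (h ▸ hxI), hx⟩,
      fun ⟨hxz, hx⟩ => ⟨hx, hsub (mem_erase.mpr ⟨hxz, hx⟩)⟩⟩
  rw [heq, card_erase_of_mem hzi, hblock]

theorem sum_card_blocksIn_insert_le [Fintype α] (hblock : ∀ i, #(B i) = 3)
    (hpair : ∀ x y : α, x ≠ y → #{i | x ∈ B i ∧ y ∈ B i} = 1) {I : Finset α}
    (hI : blocksIn B I = ∅) :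
    ∑ z ∈ Iᶜ, #(blocksIn B (insert z I)) ≤ (#I).choose 2 := by
  classical
  have hdisj : ((Iᶜ : Finset α) : Set α).PairwiseDisjoint fun z => blocksIn B (insert z I) := by
    intro z hz z' _ hne
    refine disjoint_left.mpr fun i hi hi' => blocksIn_eq_empty.mp hI i ?_
    intro x hx
    rcases mem_insert.mp (mem_blocksIn.mp hi hx) with rfl | hxI
    · rcases mem_insert.mp (mem_blocksIn.mp hi' hx) with h | h
      · exact absurd h hne
      · exact absurd h (mem_compl.mp hz)
    · exact hxI
  rw [← card_biUnion hdisj, ← card_powersetCard]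
  have htwo {i : ι} (hi : i ∈ Iᶜ.biUnion fun z => blocksIn B (insert z I)) : #(B i ∩ I) = 2 := by
    obtain ⟨z, hz, hiz⟩ := mem_biUnion.mp hi
    exact card_inter_eq_two_of_mem_blocksIn_insert hblock hI (mem_compl.mp hz) hiz
  refine card_le_card_of_injOn (fun i => B i ∩ I)
    (fun i hi => mem_powersetCard.mpr ⟨inter_subset_right, htwo hi⟩)
    (fun i hi j _ (hij : B i ∩ I = B j ∩ I) => ?_)
  obtain ⟨x, y, hxy, hxyi⟩ := card_eq_two.mp (htwo hi)
  have hx : x ∈ B i ∩ I := hxyi ▸ mem_insert_self x {y}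
  have hy : y ∈ B i ∩ I := hxyi ▸ mem_insert_of_mem (mem_singleton_self y)
  have hx' : x ∈ B j ∩ I := hij ▸ hx
  have hy' : y ∈ B j ∩ I := hij ▸ hy
  exact eq_of_mem_of_mem hpair hxy (mem_inter.mp hx).1 (mem_inter.mp hy).1
    (mem_inter.mp hx').1 (mem_inter.mp hy').1

theorem exists_card_blocksIn_insert_le [Fintype α] (hblock : ∀ i, #(B i) = 3)
    (hpair : ∀ x y : α, x ≠ y → #{i | x ∈ B i ∧ y ∈ B i} = 1) {I : Finset α}
    (hI : blocksIn B I = ∅) {m : ℕ} (hm : (#I).choose 2 < (m + 1) * #Iᶜ) :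
    ∃ z ∉ I, #(blocksIn B (insert z I)) ≤ m := by
  obtain ⟨z, hz, hlt⟩ := exists_lt_of_sum_lt (s := Iᶜ) (g := fun _ => m + 1) <|
    (sum_card_blocksIn_insert_le hblock hpair hI).trans_lt (by simpa [mul_comm] using hm)
  exact ⟨z, mem_compl.mp hz, Nat.lt_succ_iff.mp hlt⟩

variable [Fintype α]

theorem exists_card_eq_six_blocksIn_eq_empty (hv : Fintype.card α = 19)
    (hblock : ∀ i, #(B i) = 3) (hpair : ∀ x y : α, x ≠ y → #{i | x ∈ B i ∧ y ∈ B i} = 1) :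
    ∃ I : Finset α, #I = 6 ∧ blocksIn B I = ∅ := by
  suffices ∀ k ≤ 6, ∃ I : Finset α, #I = k ∧ blocksIn B I = ∅ from this 6 le_rfl
  intro k hk
  induction k with
  | zero =>
    refine ⟨∅, card_empty, blocksIn_eq_empty.mpr fun i h => ?_⟩
    simpa [subset_empty.mp h] using hblock i
  | succ k ih =>
    obtain ⟨I, hIk, hI⟩ := ih (by omega)
    obtain ⟨z, hz, hzI⟩ := exists_card_blocksIn_insert_le hblock hpair hI (m := 0)
      (by
        have : k ≤ 5 := by omega
        rw [card_compl, hv, hIk]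
        interval_cases k <;> decide)
    exact ⟨insert z I, by rw [card_insert_of_notMem hz, hIk],
      card_eq_zero.mp (Nat.le_zero.mp hzI)⟩

theorem domNum_le_fifteen_of_card_blocksIn_le_one (hv : Fintype.card α = 19)
    (hblock : ∀ i, #(B i) = 3) (hcov : ∀ x y : α, ∃ i, x ∈ B i ∧ y ∈ B i) {J : Finset α}
    (hJ : #(blocksIn B J) ≤ 1) (hJ8 : 8 ≤ #J + #(blocksIn B J)) :
    domNum (incGraph B) ≤ 15 := by
  have h := two_mul_domNum_le hcov J
  have hJ19 : #J ≤ 19 := hv ▸ card_le_univ J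
  rw [card_compl, hv] at h
  rcases Nat.le_one_iff_eq_zero_or_eq_one.mp hJ with h0 | h1
  · rw [card_eq_zero.mp h0, biUnion_empty, sdiff_empty, card_empty] at h
    omega
  · obtain ⟨i, hi⟩ := card_eq_one.mp h1
    have hiJ : B i ⊆ J := mem_blocksIn.mp (hi ▸ mem_singleton_self i)
    rw [hi, singleton_biUnion, card_sdiff_of_subset hiJ, hblock, card_singleton] at h
    omega

theorem domNum_le_fifteen (hv : Fintype.card α = 19) (hblock : ∀ i, #(B i) = 3)
    (hpair : ∀ x y : α, x ≠ y → #{i | x ∈ B i ∧ y ∈ B i} = 1) :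
    domNum (incGraph B) ≤ 15 := by
  have : Nontrivial α := Fintype.one_lt_card_iff_nontrivial.mp (by omega)
  have hcov := exists_mem_and_mem hpair
  have hcompl (J : Finset α) : #Jᶜ = 19 - #J := by rw [card_compl, hv]
  obtain ⟨I, hI6, hI⟩ := exists_card_eq_six_blocksIn_eq_empty hv hblock hpair
  obtain ⟨z, hz, hzI⟩ := exists_card_blocksIn_insert_le hblock hpair hI (m := 1)
    (by rw [hcompl, hI6]; decide)
  have h7 : #(insert z I) = 7 := by rw [card_insert_of_notMem hz, hI6]
  rcases Nat.le_one_iff_eq_zero_or_eq_one.mp hzI with h0 | h1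
  · obtain ⟨z', hz', hz'I⟩ := exists_card_blocksIn_insert_le hblock hpair (card_eq_zero.mp h0)
      (m := 1) (by rw [hcompl, h7]; decide)
    refine domNum_le_fifteen_of_card_blocksIn_le_one hv hblock hcov hz'I ?_
    rw [card_insert_of_notMem hz', h7]
    omega
  · exact domNum_le_fifteen_of_card_blocksIn_le_one hv hblock hcov hzI (by omega)

end BlocksIn

/-- For a Steiner triple system on `19` points (a `(19,3,1)`-design),
`12 ≤ γ(D) ≤ 15`. -/
theorem stmt14 [Fintype α] [Fintype ι] [DecidableEq α]
    (B : ι → Finset α)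
    (hv : Fintype.card α = 19)
    (hblock : ∀ i, (B i).card = 3)
    (hpair : ∀ x y : α, x ≠ y →
      (Finset.univ.filter fun i => x ∈ B i ∧ y ∈ B i).card = 1) :
    12 ≤ domNum (incGraph B) ∧ domNum (incGraph B) ≤ 15 := by
  obtain ⟨S, hS, hcard⟩ := exists_isDomSet_card_eq_domNum (incGraph B)
  exact ⟨hcard ▸ twelve_le_card_of_isDomSet hv hblock hpair hS, domNum_le_fifteen hv hblock hpair⟩
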